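/- Let 1 ≤ p < ∞ and let E = ⋃_{j∈ℕ} E_j where the E_j are pairwise disjoint measurable subsets of ℝⁿ. Then for every measurable f : ℝⁿ → ℝ one has Σ_j ‖f‖_{L^{p,1}(E_j)}^p ≤ ‖f‖_{L^{p,1}(E)}^p. -/

import Mathlib

/-!
For `t > 0` the level sets `{t < |f|}` of the indicators `1_{E_j} f` partition that of
`1_E f`, so with `g_j(t) = |{t < |1_{E_j} f|}|^{1/p}` the right-hand side is
`(∫₀^∞ ‖(g_j(t))_j‖_{ℓ^p} dt)^p`, while the left-hand side is `‖(∫₀^∞ g_j)_j‖_{ℓ^p}^p`.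
The inequality is therefore Minkowski's integral inequality, proved by testing against the
dual weights `(∫ g_j)^{p-1}` and applying Hölder's inequality pointwise in `t`.
-/

open MeasureTheory Set
open scoped ENNReal

/-- The Lorentz `L^{p,1}` norm, `‖f‖_{L^{p,1}} = ∫₀^∞ (L^n {|f| > t})^{1/p} dt`. -/
noncomputable def lorentzNorm {n : ℕ} (p : ℝ) (f : EuclideanSpace ℝ (Fin n) → ℝ) : ℝ≥0∞ :=
  ∫⁻ t in Set.Ioi (0 : ℝ), (volume {x | t < |f x|}) ^ (1 / p)

namespace ENNReal

theorem le_rpow_of_le_rpow_mul {S I : ℝ≥0∞} {p q : ℝ} (hpq : p.HolderConjugate q)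
    (hS : S ≠ ⊤) (h : S ≤ S ^ (1 / q) * I) : S ≤ I ^ p := by
  rcases eq_or_ne S 0 with rfl | hS0
  · exact zero_le
  have hSq_ne_zero : S ^ (1 / q) ≠ 0 := (rpow_pos (pos_iff_ne_zero.2 hS0) hS).ne'
  have hSq_ne_top : S ^ (1 / q) ≠ ⊤ := rpow_ne_top_of_nonneg hpq.symm.one_div_nonneg hS
  have hsplit : S ^ (1 / q) * S ^ (1 / p) = S := by
    rw [← rpow_add_of_nonneg _ _ hpq.symm.one_div_nonneg hpq.one_div_nonneg,
      hpq.symm.one_div_add_one_div, one_div_one, rpow_one]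
  have h1p : S ^ (1 / p) ≤ I :=
    (ENNReal.mul_le_mul_iff_right hSq_ne_zero hSq_ne_top).mp (hsplit.trans_le h)
  calc S = (S ^ (1 / p)) ^ p := by rw [← rpow_mul, one_div_mul_cancel hpq.ne_zero, rpow_one]
    _ ≤ I ^ p := rpow_le_rpow h1p hpq.nonneg

end ENNReal

section Minkowski

variable {α ι : Type*} [MeasurableSpace α] {μ : Measure α} {p : ℝ} {g : ι → α → ℝ≥0∞}

theorem lintegral_le_lintegral_rpow_sum_rpow (hp : 0 < p) {s : Finset ι} {i : ι} (hi : i ∈ s) :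
    ∫⁻ x, g i x ∂μ ≤ ∫⁻ x, (∑ j ∈ s, g j x ^ p) ^ (1 / p) ∂μ := by
  refine lintegral_mono fun x => ?_
  calc g i x = (g i x ^ p) ^ (1 / p) := by
        rw [← ENNReal.rpow_mul, mul_one_div_cancel hp.ne', ENNReal.rpow_one]
    _ ≤ _ := ENNReal.rpow_le_rpow
        (Finset.single_le_sum (f := fun j => g j x ^ p) (fun j _ => zero_le) hi)
        (one_div_nonneg.2 hp.le)

theorem sum_rpow_lintegral_le_of_one_lt (hp : 1 < p) (s : Finset ι)
    (hg : ∀ i, AEMeasurable (g i) μ) :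
    ∑ i ∈ s, (∫⁻ x, g i x ∂μ) ^ p ≤ (∫⁻ x, (∑ i ∈ s, g i x ^ p) ^ (1 / p) ∂μ) ^ p := by
  set a : ι → ℝ≥0∞ := fun i => ∫⁻ x, g i x ∂μ
  set I := ∫⁻ x, (∑ i ∈ s, g i x ^ p) ^ (1 / p) ∂μ
  set S := ∑ i ∈ s, a i ^ p
  rcases eq_or_ne I ⊤ with hI | hI
  · rw [hI, ENNReal.top_rpow_of_pos (by linarith)]
    exact le_top
  have hpq := Real.HolderConjugate.conjExponent hp
  set q := p.conjExponent
  have ha : ∀ i ∈ s, a i ≠ ⊤ := fun i hi =>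
    ne_top_of_le_ne_top hI (lintegral_le_lintegral_rpow_sum_rpow hpq.pos hi)
  have hS : S ≠ ⊤ := ENNReal.sum_ne_top.2 fun i hi =>
    ENNReal.rpow_ne_top_of_nonneg hpq.nonneg (ha i hi)
  refine ENNReal.le_rpow_of_le_rpow_mul hpq hS ?_
  have hweights : ∑ i ∈ s, (a i ^ (p - 1)) ^ q = S := by
    refine Finset.sum_congr rfl fun i _ => ?_
    rw [← ENNReal.rpow_mul, hpq.sub_one_mul_conj]
  calc S = ∑ i ∈ s, a i ^ (p - 1) * a i := by
        refine Finset.sum_congr rfl fun i _ => ?_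
        have := ENNReal.rpow_add_of_nonneg (x := a i) _ _ hpq.sub_one_pos.le zero_le_one
        rwa [sub_add_cancel, ENNReal.rpow_one] at this
    _ = ∫⁻ x, ∑ i ∈ s, a i ^ (p - 1) * g i x ∂μ := by
        rw [lintegral_finsetSum' _ fun i _ => (hg i).const_mul _]
        simp only [lintegral_const_mul'' _ (hg _), a]
    _ ≤ ∫⁻ x, S ^ (1 / q) * (∑ i ∈ s, g i x ^ p) ^ (1 / p) ∂μ := by
        refine lintegral_mono fun x => ?_
        have := ENNReal.inner_le_Lp_mul_Lq s (fun i => a i ^ (p - 1)) (fun i => g i x) hpq.symm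
        rwa [hweights] at this
    _ = S ^ (1 / q) * I :=
        lintegral_const_mul' _ _ (ENNReal.rpow_ne_top_of_nonneg hpq.symm.one_div_nonneg hS)

theorem sum_rpow_lintegral_le (hp : 1 ≤ p) (s : Finset ι) (hg : ∀ i, AEMeasurable (g i) μ) :
    ∑ i ∈ s, (∫⁻ x, g i x ∂μ) ^ p ≤ (∫⁻ x, (∑ i ∈ s, g i x ^ p) ^ (1 / p) ∂μ) ^ p := by
  rcases hp.eq_or_lt with rfl | hp
  · simp only [ENNReal.rpow_one, div_one]
    exact (lintegral_finsetSum' s fun i _ => hg i).ge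
  · exact sum_rpow_lintegral_le_of_one_lt hp s hg

theorem tsum_rpow_lintegral_le (hp : 1 ≤ p) (hg : ∀ i, AEMeasurable (g i) μ) :
    ∑' i, (∫⁻ x, g i x ∂μ) ^ p ≤ (∫⁻ x, (∑' i, g i x ^ p) ^ (1 / p) ∂μ) ^ p := by
  rw [ENNReal.tsum_eq_iSup_sum]
  refine iSup_le fun s => (sum_rpow_lintegral_le hp s hg).trans ?_
  gcongr with x
  exact ENNReal.sum_le_tsum s

end Minkowski

theorem setOf_lt_abs_indicator {α : Type*} (f : α → ℝ) (A : Set α) {t : ℝ} (ht : 0 ≤ t) :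
    {x | t < |A.indicator f x|} = A ∩ {x | t < |f x|} := by
  ext x
  by_cases hx : x ∈ A <;> simp [hx, ht.not_gt]

section Distribution

variable {α : Type*} [MeasurableSpace α] (μ : Measure α) (f : α → ℝ)

theorem measure_lt_abs_indicator_iUnion {E : ℕ → Set α} (hmeas : ∀ j, MeasurableSet (E j))
    (hdisj : Pairwise (Function.onFun Disjoint E)) {t : ℝ} (ht : 0 ≤ t) :
    μ {x | t < |(⋃ j, E j).indicator f x|} = ∑' j, μ {x | t < |(E j).indicator f x|} := by
  simp only [setOf_lt_abs_indicator f _ ht, inter_comm (E _), inter_comm (⋃ j, E j),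
    ← Measure.restrict_apply' (MeasurableSet.iUnion hmeas), ← Measure.restrict_apply' (hmeas _),
    Measure.restrict_iUnion hdisj hmeas, Measure.sum_apply_of_countable]

theorem measurable_measure_lt_abs : Measurable fun t => μ {x | t < |f x|} :=
  Antitone.measurable fun _ _ hst => measure_mono fun _ hx => hst.trans_lt hx

end Distribution

theorem lorentz_pow_superadditive_general {n : ℕ} (p : ℝ) (hp1 : 1 ≤ p)
    (E : ℕ → Set (EuclideanSpace ℝ (Fin n)))
    (hmeas : ∀ j, MeasurableSet (E j))
    (hdisj : Pairwise (Function.onFun Disjoint E))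
    (f : EuclideanSpace ℝ (Fin n) → ℝ) :
    ∑' j, (lorentzNorm p ((E j).indicator f)) ^ p
      ≤ (lorentzNorm p ((⋃ j, E j).indicator f)) ^ p := by
  have hp : 0 < p := zero_lt_one.trans_le hp1
  have hdist : ∀ t ∈ Ioi (0 : ℝ),
      (∑' j, (volume {x | t < |(E j).indicator f x|} ^ (1 / p)) ^ p) ^ (1 / p)
        = volume {x | t < |(⋃ j, E j).indicator f x|} ^ (1 / p) := fun t ht => by
    rw [measure_lt_abs_indicator_iUnion volume f hmeas hdisj (le_of_lt ht)]
    simp only [← ENNReal.rpow_mul, one_div_mul_cancel hp.ne', ENNReal.rpow_one]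
  calc ∑' j, lorentzNorm p ((E j).indicator f) ^ p
      ≤ (∫⁻ t in Ioi 0, (∑' j, (volume {x | t < |(E j).indicator f x|} ^ (1 / p)) ^ p)
          ^ (1 / p)) ^ p :=
        tsum_rpow_lintegral_le hp1 fun j =>
          ((measurable_measure_lt_abs volume _).pow_const _).aemeasurable
    _ = lorentzNorm p ((⋃ j, E j).indicator f) ^ p := by
        rw [setLIntegral_congr_fun measurableSet_Ioi hdist]
        rfl

/-- Superadditivity of the `p`-th power of the Lorentz `L^{p,1}` norm over a countable
disjoint decomposition. -/
theorem lorentz_pow_superadditive {n : ℕ} (p : ℝ) (hp1 : 1 ≤ p)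
    (E : ℕ → Set (EuclideanSpace ℝ (Fin n)))
    (hmeas : ∀ j, MeasurableSet (E j))
    (hdisj : Pairwise (Function.onFun Disjoint E))
    (f : EuclideanSpace ℝ (Fin n) → ℝ) (hf : Measurable f) :
    ∑' j, (lorentzNorm p ((E j).indicator f)) ^ p
      ≤ (lorentzNorm p ((⋃ j, E j).indicator f)) ^ p :=
  lorentz_pow_superadditive_general p hp1 E hmeas hdisj f
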